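/- Local structure of the tetrahedral cone away from the origin: (i) if z ∈ T does not lie on any junction ray L(a), then z lies in the interior of exactly one wedge W(ab) and there exists r > 0 with T ∩ B_r(z) = P(ab) ∩ B_r(z); (ii) if z ∈ L(a) ∖ {0}, then there exist r > 0 and an orthogonal map q ∈ O(3) with T ∩ B_r(z) = z + q((Y¹ × ℝ) ∩ B_r(0)), where Y¹ ⊂ ℝ² is the union of the three rays spanned by (1,0), (−1/2, √3/2), (−1/2, −√3/2). In particular, away from the origin a small neighborhood of T is, up to rigid motion, either a disk in a plane or a neighborhood in Y¹ × ℝ. -/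

import Mathlib

/-!
STATEMENT 14: Local structure of the tetrahedral cone away from the origin:
(i) if `z ∈ T` lies on no junction ray `L(a)`, then `z` lies in the interior of exactly one
wedge `W(ab)` and there is `r > 0` with `T ∩ B_r(z) = P(ab) ∩ B_r(z)`;
(ii) if `z ∈ L(a) ∖ {0}`, then there are `r > 0` and an orthogonal map `q ∈ O(3)` with
`T ∩ B_r(z) = z + q((Y¹ × ℝ) ∩ B_r(0))`, where `Y¹ ⊂ ℝ²` is the union of the three rays
spanned by `(1,0)`, `(−1/2, √3/2)`, `(−1/2, −√3/2)`.
-/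

noncomputable section

open Real Metric

/-- Euclidean 3-space. -/
abbrev E3 : Type := EuclideanSpace ℝ (Fin 3)

/-- The four vertices of the tetrahedral net. -/
def tp : Fin 4 → E3
  | 0 => (EuclideanSpace.equiv (Fin 3) ℝ).symm ![1, 0, 0]
  | 1 => (EuclideanSpace.equiv (Fin 3) ℝ).symm ![-1/3, 2 * Real.sqrt 2 / 3, 0]
  | 2 => (EuclideanSpace.equiv (Fin 3) ℝ).symm ![-1/3, -Real.sqrt 2 / 3, Real.sqrt 6 / 3]
  | 3 => (EuclideanSpace.equiv (Fin 3) ℝ).symm ![-1/3, -Real.sqrt 2 / 3, -Real.sqrt 6 / 3]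

/-- The wedge `W(ab) = {s • p_a + t • p_b : s, t ≥ 0}`. -/
def Wdg (a b : Fin 4) : Set E3 := {x | ∃ s t : ℝ, 0 ≤ s ∧ 0 ≤ t ∧ x = s • tp a + t • tp b}

/-- The (relative) interior of the wedge `W(ab)`. -/
def WdgInt (a b : Fin 4) : Set E3 := {x | ∃ s t : ℝ, 0 < s ∧ 0 < t ∧ x = s • tp a + t • tp b}

/-- The plane `P(ab) = span(p_a, p_b)`. -/
def Pl (a b : Fin 4) : Submodule ℝ E3 := Submodule.span ℝ {tp a, tp b}

/-- The tetrahedral cone `T = ⋃_{a<b} W(ab)`. -/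
def Tcone : Set E3 := ⋃ (a : Fin 4) (b : Fin 4) (_ : a < b), Wdg a b

/-- The junction ray `L(a) = {t • p_a : t ≥ 0}`. -/
def ray (a : Fin 4) : Set E3 := {x | ∃ t : ℝ, 0 ≤ t ∧ x = t • tp a}

/-- The three unit directions of the `Y¹` cone, embedded into the first two coordinates
of `ℝ³`. -/
def yDir : Fin 3 → E3
  | 0 => (EuclideanSpace.equiv (Fin 3) ℝ).symm ![1, 0, 0]
  | 1 => (EuclideanSpace.equiv (Fin 3) ℝ).symm ![-1/2, Real.sqrt 3 / 2, 0]
  | 2 => (EuclideanSpace.equiv (Fin 3) ℝ).symm ![-1/2, -Real.sqrt 3 / 2, 0]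

/-- The cylinder `Y¹ × ℝ ⊂ ℝ³`: the union of three half-planes meeting at 120° along the
third coordinate axis. -/
def Ycyl : Set E3 :=
  {x | ∃ (j : Fin 3) (t s : ℝ), 0 ≤ t ∧
    x = t • yDir j + s • (EuclideanSpace.single (2 : Fin 3) (1:ℝ))}

/-! ### Auxiliary lemmas -/

lemma gram : ∀ a b : Fin 4, (inner ℝ (tp a) (tp b) : ℝ) = if a = b then 1 else -1/3 := by
  have h2 : Real.sqrt 2 * Real.sqrt 2 = 2 := Real.mul_self_sqrt (by norm_num)
  have h6 : Real.sqrt 6 * Real.sqrt 6 = 6 := Real.mul_self_sqrt (by norm_num)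
  intro a b
  fin_cases a <;> fin_cases b <;> rw [PiLp.inner_apply] <;>
    simp [tp, PiLp.inner_apply, Fin.sum_univ_three, RCLike.inner_apply] <;>
    nlinarith [h2, h6]

lemma sum_tp : tp 0 + tp 1 + tp 2 + tp 3 = 0 := by
  ext i
  fin_cases i <;> simp [tp] <;> ring

lemma tp3_eq : tp 3 = -tp 0 - tp 1 - tp 2 := by
  have h := sum_tp
  rw [← sub_eq_zero, show tp 3 - (-tp 0 - tp 1 - tp 2) = tp 0 + tp 1 + tp 2 + tp 3 by module, h]

lemma norm_tp (a : Fin 4) : ‖tp a‖ = 1 := by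
  have h := gram a a
  rw [if_pos rfl, real_inner_self_eq_norm_sq] at h
  nlinarith [norm_nonneg (tp a)]

lemma inner_comb (s t : ℝ) (x y c : Fin 4) :
    (inner ℝ (s • tp x + t • tp y) (tp c) : ℝ)
      = s * (if x = c then 1 else -1/3) + t * (if y = c then 1 else -1/3) := by
  rw [inner_add_left, real_inner_smul_left, real_inner_smul_left, gram, gram]

lemma coeff_est (x y : Fin 4) (hxy : x ≠ y) (u v : ℝ) :
    |u| ≤ (3/2) * ‖u • tp x + v • tp y‖ := by
  set d : E3 := u • tp x + v • tp y with hd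
  have ha : (inner ℝ d (tp x) : ℝ) = u - v/3 := by
    rw [hd, inner_comb, if_pos rfl, if_neg (Ne.symm hxy)]; ring
  have hb : (inner ℝ d (tp y) : ℝ) = -u/3 + v := by
    rw [hd, inner_comb, if_neg hxy, if_pos rfl]; ring
  have h1 : |(inner ℝ d (tp x) : ℝ)| ≤ ‖d‖ := by
    simpa [norm_tp] using abs_real_inner_le_norm d (tp x)
  have h2 : |(inner ℝ d (tp y) : ℝ)| ≤ ‖d‖ := by
    simpa [norm_tp] using abs_real_inner_le_norm d (tp y)
  rw [ha] at h1; rw [hb] at h2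
  rw [abs_le] at h1 h2 ⊢
  constructor <;> nlinarith [h1.1, h1.2, h2.1, h2.2]

lemma pairsplit : ∀ x y a b : Fin 4, x < y → a < b → ¬(x = a ∧ y = b) →
    ∃ c d : Fin 4, (c = a ∨ c = b) ∧ c ≠ x ∧ c ≠ y ∧ (d = x ∨ d = y) ∧ d ≠ a ∧ d ≠ b := by
  decide

lemma fin4_cases : ∀ x : Fin 4, x = 0 ∨ x = 1 ∨ x = 2 ∨ x = 3 := by decide
lemma fin3_cases : ∀ j : Fin 3, j = 0 ∨ j = 1 ∨ j = 2 := by decide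

lemma mem_Tcone (x y : Fin 4) (hxy : x ≠ y) (s t : ℝ) (hs : 0 ≤ s) (ht : 0 ≤ t) :
    s • tp x + t • tp y ∈ Tcone := by
  rcases lt_or_gt_of_ne hxy with h | h
  · simp only [Tcone, Wdg, Set.mem_iUnion, Set.mem_setOf_eq]
    exact ⟨x, y, h, s, t, hs, ht, rfl⟩
  · simp only [Tcone, Wdg, Set.mem_iUnion, Set.mem_setOf_eq]
    exact ⟨y, x, h, t, s, ht, hs, (add_comm _ _)⟩

/-- Key separation lemma: if `z` is in the open wedge over `(a,b)` and `w` is in the closed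
wedge over a different pair `(x,y)`, then `w` is at distance at least `min s t / 2` from `z`. -/
lemma wedge_sep {x y a b : Fin 4} (hxy : x < y) (hab : a < b) (hne : ¬(x = a ∧ y = b))
    {s t s' t' : ℝ} (hs : 0 < s) (ht : 0 < t) (hs' : 0 ≤ s') (ht' : 0 ≤ t')
    (hclose : ‖(s' • tp x + t' • tp y) - (s • tp a + t • tp b)‖ < min s t / 2) : False := by
  obtain ⟨c, d, hc, hcx, hcy, hd, hda, hdb⟩ := pairsplit x y a b hxy hab hne
  set z : E3 := s • tp a + t • tp b with hzdef
  set w : E3 := s' • tp x + t' • tp y with hwdef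
  have hab' : a ≠ b := ne_of_lt hab
  have hxy' : x ≠ y := ne_of_lt hxy
  have hzd : (inner ℝ z (tp d) : ℝ) = -(s+t)/3 := by
    rw [hzdef, inner_comb, if_neg (Ne.symm hda), if_neg (Ne.symm hdb)]; ring
  have hzc : (inner ℝ z (tp c) : ℝ) - (inner ℝ z (tp d) : ℝ) ≥ (4/3) * min s t := by
    rcases hc with hce | hce
    · have hzc' : (inner ℝ z (tp a) : ℝ) = s - t/3 := by
        rw [hzdef, inner_comb, if_pos rfl, if_neg (Ne.symm hab')]; ring
      rw [hce, hzc', hzd]; have := min_le_left s t; linarith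
    · have hzc' : (inner ℝ z (tp b) : ℝ) = -s/3 + t := by
        rw [hzdef, inner_comb, if_neg hab', if_pos rfl]; ring
      rw [hce, hzc', hzd]; have := min_le_right s t; linarith
  have hwc' : (inner ℝ w (tp c) : ℝ) = -(s'+t')/3 := by
    rw [hwdef, inner_comb, if_neg (Ne.symm hcx), if_neg (Ne.symm hcy)]; ring
  have hwc : (inner ℝ w (tp c) : ℝ) - (inner ℝ w (tp d) : ℝ) ≤ 0 := by
    rcases hd with hde | hde
    · have hwx : (inner ℝ w (tp x) : ℝ) = s' - t'/3 := by
        rw [hwdef, inner_comb, if_pos rfl, if_neg (Ne.symm hxy')]; ring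
      rw [hwc', hde, hwx]; linarith
    · have hwy : (inner ℝ w (tp y) : ℝ) = -s'/3 + t' := by
        rw [hwdef, inner_comb, if_neg hxy', if_pos rfl]; ring
      rw [hwc', hde, hwy]; linarith
  have hcd : c ≠ d := by
    intro h
    rcases hd with h' | h'
    · exact hcx (h.trans h')
    · exact hcy (h.trans h')
  have hnu : ‖tp c - tp d‖ ≤ 2 := by
    have h8 : ‖tp c - tp d‖^2 = 8/3 := by
      rw [norm_sub_sq_real, norm_tp, norm_tp, gram, if_neg hcd]; norm_num
    nlinarith [norm_nonneg (tp c - tp d)]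
  have habs := abs_real_inner_le_norm (w - z) (tp c - tp d)
  have hexp : (inner ℝ (w - z) (tp c - tp d) : ℝ)
      = ((inner ℝ w (tp c) : ℝ) - (inner ℝ w (tp d) : ℝ))
        - ((inner ℝ z (tp c) : ℝ) - (inner ℝ z (tp d) : ℝ)) := by
    rw [inner_sub_left, inner_sub_right, inner_sub_right]; try ring
  have hm : 0 < min s t := lt_min hs ht
  have hprod : ‖w - z‖ * ‖tp c - tp d‖ ≤ ‖w - z‖ * 2 :=
    mul_le_mul_of_nonneg_left hnu (norm_nonneg _)
  rw [hexp] at habs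
  rw [abs_le] at habs
  linarith [habs.1, hclose, hzc, hwc, hm, hprod]

/-! ### The isometries for part (ii) -/

def cyc : Fin 3 ≃ Fin 3 := ⟨![1,2,0], ![2,0,1], by decide, by decide⟩

def q0 : E3 ≃ₗᵢ[ℝ] E3 := LinearIsometryEquiv.piLpCongrLeft 2 ℝ ℝ cyc

lemma q0_apply (v : E3) (i : Fin 3) : q0 v i = v (cyc.symm i) := rfl

def nbr : Fin 4 → Fin 3 → Fin 4 := ![![1,2,3], ![0,3,2], ![3,0,1], ![2,1,0]]
def tau : Fin 4 → Fin 4 → Fin 4 := ![![0,1,2,3], ![1,0,3,2], ![2,3,0,1], ![3,2,1,0]]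

lemma nbr_ne : ∀ (a : Fin 4) (j : Fin 3), nbr a j ≠ a := by decide
lemma nbr_surj : ∀ a b : Fin 4, b ≠ a → ∃ j, nbr a j = b := by decide
lemma tau_zero : ∀ a : Fin 4, a ≠ 0 → tau a 0 = a := by decide
lemma tau_nbr : ∀ a : Fin 4, a ≠ 0 → ∀ j, tau a (nbr 0 j) = nbr a j := by decide

lemma q0_single : q0 (EuclideanSpace.single (2 : Fin 3) (1:ℝ)) = tp 0 := by
  ext i
  fin_cases i <;> simp [q0_apply, cyc, tp, EuclideanSpace.single_apply]

lemma sqrt26 : Real.sqrt 2 * Real.sqrt 6 = 2 * Real.sqrt 3 := by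
  rw [← Real.sqrt_mul (by norm_num : (0:ℝ) ≤ 2)]
  rw [show (2:ℝ) * Real.sqrt 3 = Real.sqrt (2^2) * Real.sqrt 3 by
    rw [Real.sqrt_sq (by norm_num : (0:ℝ) ≤ 2)]]
  rw [← Real.sqrt_mul (by positivity)]
  norm_num

lemma q0_yDir (j : Fin 3) :
    q0 (yDir j) = (Real.sqrt 2/4) • tp 0 + (3*Real.sqrt 2/4) • tp (nbr 0 j) := by
  have h2 : Real.sqrt 2 * Real.sqrt 2 = 2 := Real.mul_self_sqrt (by norm_num)
  fin_cases j <;> ext i <;> fin_cases i <;>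
    simp [q0_apply, cyc, tp, yDir, nbr, PiLp.add_apply, PiLp.smul_apply, smul_eq_mul] <;>
    nlinarith [h2, sqrt26]

lemma refl_helper (a c d : Fin 4) (ha : a ≠ 0) (ε : ℝ)
    (h1 : (inner ℝ (tp 0 + tp a) (tp c) : ℝ) = ε * (2/3))
    (h2 : ε • (tp 0 + tp a) - tp c = tp d) :
    Submodule.reflection (ℝ ∙ (tp 0 + tp a)) (tp c) = tp d := by
  rw [Submodule.reflection_singleton_apply]
  have hn : ‖tp 0 + tp a‖^2 = (4/3:ℝ) := by
    rw [← real_inner_self_eq_norm_sq, inner_add_left, inner_add_right, inner_add_right,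
      gram, gram, gram, gram]
    rw [if_pos rfl, if_pos rfl, if_neg (Ne.symm ha), if_neg ha]
    norm_num
  simp only [RCLike.ofReal_real_eq_id, id_eq]
  rw [h1, hn, two_smul, ← h2]
  have hh : (ε * (2/3) / (4/3)) = ε/2 := by ring
  rw [hh]
  module

lemma refl_tp (a : Fin 4) (ha : a ≠ 0) (c : Fin 4) :
    Submodule.reflection (ℝ ∙ (tp 0 + tp a)) (tp c) = tp (tau a c) := by
  have h3 := tp3_eq
  rcases fin4_cases a with rfl|rfl|rfl|rfl
  · exact absurd rfl ha
  · rcases fin4_cases c with rfl|rfl|rfl|rfl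
    · exact refl_helper _ _ _ ha 1
        (by rw [inner_add_left, gram, gram]; simp; try norm_num)
        (by show _ = tp _; simp only [tau, Matrix.cons_val]; try norm_num; try rw [h3]; module)
    · exact refl_helper _ _ _ ha 1
        (by rw [inner_add_left, gram, gram]; simp; try norm_num)
        (by show _ = tp _; simp only [tau, Matrix.cons_val]; try norm_num; try rw [h3]; module)
    · exact refl_helper _ _ _ ha (-1)
        (by rw [inner_add_left, gram, gram]; simp; try norm_num)
        (by show _ = tp _; simp only [tau, Matrix.cons_val]; try norm_num; try rw [h3]; module)
    · exact refl_helper _ _ _ ha (-1)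
        (by rw [inner_add_left, gram, gram]; simp; try norm_num)
        (by show _ = tp _; simp only [tau, Matrix.cons_val]; try norm_num; try rw [h3]; module)
  · rcases fin4_cases c with rfl|rfl|rfl|rfl
    · exact refl_helper _ _ _ ha 1
        (by rw [inner_add_left, gram, gram]; simp; try norm_num)
        (by show _ = tp _; simp only [tau, Matrix.cons_val]; try norm_num; try rw [h3]; module)
    · exact refl_helper _ _ _ ha (-1)
        (by rw [inner_add_left, gram, gram]; simp; try norm_num)
        (by show _ = tp _; simp only [tau, Matrix.cons_val]; try norm_num; try rw [h3]; module)
    · exact refl_helper _ _ _ ha 1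
        (by rw [inner_add_left, gram, gram]; simp; try norm_num)
        (by show _ = tp _; simp only [tau, Matrix.cons_val]; try norm_num; try rw [h3]; module)
    · exact refl_helper _ _ _ ha (-1)
        (by rw [inner_add_left, gram, gram]; simp; try norm_num)
        (by show _ = tp _; simp only [tau, Matrix.cons_val]; try norm_num; try rw [h3]; module)
  · rcases fin4_cases c with rfl|rfl|rfl|rfl
    · exact refl_helper _ _ _ ha 1
        (by rw [inner_add_left, gram, gram]; simp; try norm_num)
        (by show _ = tp _; simp only [tau, Matrix.cons_val]; try norm_num; try rw [h3]; module)
    · exact refl_helper _ _ _ ha (-1)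
        (by rw [inner_add_left, gram, gram]; simp; try norm_num)
        (by show _ = tp _; simp only [tau, Matrix.cons_val]; try norm_num; try rw [h3]; module)
    · exact refl_helper _ _ _ ha (-1)
        (by rw [inner_add_left, gram, gram]; simp; try norm_num)
        (by show _ = tp _; simp only [tau, Matrix.cons_val]; try norm_num; try rw [h3]; module)
    · exact refl_helper _ _ _ ha 1
        (by rw [inner_add_left, gram, gram]; simp; try norm_num)
        (by show _ = tp _; simp only [tau, Matrix.cons_val]; try norm_num; try rw [h3]; module)

def Q (a : Fin 4) : E3 ≃ₗᵢ[ℝ] E3 :=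
  if h : a = 0 then q0 else q0.trans (Submodule.reflection (ℝ ∙ (tp 0 + tp a)))

lemma Q_single (a : Fin 4) : Q a (EuclideanSpace.single (2 : Fin 3) (1:ℝ)) = tp a := by
  by_cases h : a = 0
  · subst h; unfold Q; rw [dif_pos rfl]; exact q0_single
  · unfold Q; rw [dif_neg h]
    rw [LinearIsometryEquiv.trans_apply, q0_single, refl_tp a h 0, tau_zero a h]

lemma Q_yDir (a : Fin 4) (j : Fin 3) :
    Q a (yDir j) = (Real.sqrt 2/4) • tp a + (3*Real.sqrt 2/4) • tp (nbr a j) := by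
  by_cases h : a = 0
  · subst h; unfold Q; rw [dif_pos rfl]; exact q0_yDir j
  · unfold Q; rw [dif_neg h]
    rw [LinearIsometryEquiv.trans_apply, q0_yDir j, map_add, map_smul, map_smul,
      refl_tp a h 0, refl_tp a h (nbr 0 j), tau_zero a h, tau_nbr a h j]

lemma yinner (j : Fin 3) :
    (inner ℝ (yDir j) (EuclideanSpace.single (2 : Fin 3) (1:ℝ)) : ℝ) = 0 := by
  rcases fin3_cases j with rfl|rfl|rfl <;>
    simp [yDir, EuclideanSpace.inner_single_right]

lemma einner :
    (inner ℝ (EuclideanSpace.single (2 : Fin 3) (1:ℝ))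
      (EuclideanSpace.single (2 : Fin 3) (1:ℝ)) : ℝ) = 1 := by
  simp [EuclideanSpace.inner_single_right, EuclideanSpace.single_apply]

/-! ### The main theorem -/

/-- Local structure of the tetrahedral cone away from the origin. -/
theorem tetrahedral_cone_local_structure :
    (∀ z ∈ Tcone, z ∉ (⋃ a : Fin 4, ray a) →
      ∃ a b : Fin 4, a < b ∧ z ∈ WdgInt a b ∧
        (∀ a' b' : Fin 4, a' < b' → z ∈ WdgInt a' b' → a' = a ∧ b' = b) ∧
        ∃ r : ℝ, 0 < r ∧ Tcone ∩ ball z r = (Pl a b : Set E3) ∩ ball z r) ∧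
    (∀ a : Fin 4, ∀ z ∈ ray a, z ≠ 0 →
      ∃ (r : ℝ) (q : E3 ≃ₗᵢ[ℝ] E3), 0 < r ∧
        Tcone ∩ ball z r = (fun w => z + q w) '' (Ycyl ∩ ball (0:E3) r)) := by
  have h2 : Real.sqrt 2 * Real.sqrt 2 = 2 := Real.mul_self_sqrt (by norm_num)
  constructor
  · -- Part (i)
    intro z hz hray
    simp only [Tcone, Wdg, Set.mem_iUnion, Set.mem_setOf_eq] at hz
    obtain ⟨a, b, hab, s, t, hs0, ht0, hzeq⟩ := hz
    have hs : 0 < s := by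
      rcases hs0.lt_or_eq with h | h
      · exact h
      · exfalso
        apply hray
        refine Set.mem_iUnion.2 ⟨b, t, ht0, ?_⟩
        rw [hzeq, ← h]; simp
    have ht : 0 < t := by
      rcases ht0.lt_or_eq with h | h
      · exact h
      · exfalso
        apply hray
        refine Set.mem_iUnion.2 ⟨a, s, hs0, ?_⟩
        rw [hzeq, ← h]; simp
    have hm : 0 < min s t := lt_min hs ht
    refine ⟨a, b, hab, ⟨s, t, hs, ht, hzeq⟩, ?_, min s t / 2, by positivity, ?_⟩
    · -- uniqueness
      intro a' b' hab' hz'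
      obtain ⟨s', t', hs', ht', hzeq'⟩ := hz'
      by_contra hcon
      refine wedge_sep hab' hab hcon hs ht hs'.le ht'.le ?_
      rw [← hzeq', ← hzeq]
      simpa using (by positivity : (0:ℝ) < min s t / 2)
    · -- ball equality
      ext w
      constructor
      · rintro ⟨hwT, hwb⟩
        simp only [Tcone, Wdg, Set.mem_iUnion, Set.mem_setOf_eq] at hwT
        obtain ⟨x, y, hxy, s', t', hs', ht', hweq⟩ := hwT
        have hdist : ‖w - z‖ < min s t / 2 := by
          rw [← dist_eq_norm]; exact mem_ball.mp hwb
        have hxyab : x = a ∧ y = b := by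
          by_contra hcon
          refine wedge_sep hxy hab hcon hs ht hs' ht' ?_
          rw [← hweq, ← hzeq]; exact hdist
        obtain ⟨rfl, rfl⟩ := hxyab
        refine ⟨?_, hwb⟩
        exact Submodule.mem_span_pair.mpr ⟨s', t', hweq.symm⟩
      · rintro ⟨hwP, hwb⟩
        obtain ⟨c1, c2, hw⟩ := Submodule.mem_span_pair.mp hwP
        have hdist : ‖w - z‖ < min s t / 2 := by
          rw [← dist_eq_norm]; exact mem_ball.mp hwb
        have hdiff : w - z = (c1 - s) • tp a + (c2 - t) • tp b := by
          rw [hzeq, ← hw]; module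
        have e1 := coeff_est a b (ne_of_lt hab) (c1 - s) (c2 - t)
        rw [← hdiff] at e1
        have e2 := coeff_est b a (ne_of_lt hab).symm (c2 - t) (c1 - s)
        rw [show (c2 - t) • tp b + (c1 - s) • tp a = w - z by rw [hdiff]; module] at e2
        rw [abs_le] at e1 e2
        have hc1 : 0 ≤ c1 := by
          have := min_le_left s t; linarith [e1.1, e1.2]
        have hc2 : 0 ≤ c2 := by
          have := min_le_right s t; linarith [e2.1, e2.2]
        refine ⟨?_, hwb⟩
        rw [← hw]
        exact mem_Tcone a b (ne_of_lt hab) c1 c2 hc1 hc2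
  · -- Part (ii)
    intro a z hzray hz0
    obtain ⟨cc, hcc0, rfl⟩ := hzray
    have hcc : 0 < cc := by
      rcases hcc0.lt_or_eq with h | h
      · exact h
      · exact absurd (by rw [← h]; simp) hz0
    refine ⟨cc/2, Q a, by positivity, ?_⟩
    ext w
    constructor
    · rintro ⟨hwT, hwb⟩
      simp only [Tcone, Wdg, Set.mem_iUnion, Set.mem_setOf_eq] at hwT
      obtain ⟨x, y, hxy, s', t', hs', ht', hweq⟩ := hwT
      have hdist : ‖w - cc • tp a‖ < cc/2 := by
        rw [← dist_eq_norm]; exact mem_ball.mp hwb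
      have haxy : a = x ∨ a = y := by
        by_contra hno
        push_neg at hno
        have h1 : (inner ℝ w (tp a) : ℝ) = -(s'+t')/3 := by
          rw [hweq, inner_comb, if_neg (Ne.symm hno.1), if_neg (Ne.symm hno.2)]; ring
        have h2' : (inner ℝ (cc • tp a) (tp a) : ℝ) = cc := by
          rw [real_inner_smul_left, gram, if_pos rfl]; ring
        have h3 : |(inner ℝ (w - cc • tp a) (tp a) : ℝ)| ≤ ‖w - cc • tp a‖ := by
          simpa [norm_tp] using abs_real_inner_le_norm (w - cc • tp a) (tp a)
        rw [inner_sub_left, h1, h2', abs_le] at h3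
        linarith [h3.1, h3.2]
      obtain ⟨b, S, T, hba, hS, hT, hrep⟩ :
          ∃ (b : Fin 4) (S T : ℝ), b ≠ a ∧ 0 ≤ S ∧ 0 ≤ T ∧ w = S • tp a + T • tp b := by
        rcases haxy with rfl | rfl
        · exact ⟨y, s', t', (ne_of_lt hxy).symm, hs', ht', hweq⟩
        · exact ⟨x, t', s', ne_of_lt hxy, ht', hs', by rw [hweq]; module⟩
      obtain ⟨j, hj⟩ := nbr_surj a b hba
      refine ⟨(2*Real.sqrt 2*T/3) • yDir j + (S - cc - T/3) •
        (EuclideanSpace.single (2 : Fin 3) (1:ℝ)), ⟨⟨j, 2*Real.sqrt 2*T/3, S - cc - T/3,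
        by positivity, rfl⟩, ?_⟩, ?_⟩
      · -- in the ball
        have heqz : cc • tp a + Q a ((2*Real.sqrt 2*T/3) • yDir j + (S - cc - T/3) •
            (EuclideanSpace.single (2 : Fin 3) (1:ℝ))) = w := by
          rw [map_add, map_smul, map_smul, Q_yDir, Q_single, hj, hrep]
          match_scalars
          · linear_combination (T/6) * h2
          · linear_combination (T/2) * h2
        rw [mem_ball_zero_iff, ← (Q a).norm_map, eq_sub_of_add_eq' heqz]
        exact hdist
      · -- maps to w
        show cc • tp a + Q a _ = w
        rw [map_add, map_smul, map_smul, Q_yDir, Q_single, hj, hrep]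
        match_scalars
        · linear_combination (T/6) * h2
        · linear_combination (T/2) * h2
    · rintro ⟨w', ⟨⟨j, t0, s0, ht0, rfl⟩, hwb'⟩, rfl⟩
      have hnorm' := mem_ball_zero_iff.mp hwb'
      have hs0 : (inner ℝ (t0 • yDir j + s0 • (EuclideanSpace.single (2 : Fin 3) (1:ℝ)))
          (EuclideanSpace.single (2 : Fin 3) (1:ℝ)) : ℝ) = s0 := by
        rw [inner_add_left, real_inner_smul_left, real_inner_smul_left, yinner, einner]; ring
      have habs : |s0| ≤ ‖t0 • yDir j + s0 • (EuclideanSpace.single (2 : Fin 3) (1:ℝ))‖ := by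
        have := abs_real_inner_le_norm
          (t0 • yDir j + s0 • (EuclideanSpace.single (2 : Fin 3) (1:ℝ)))
          (EuclideanSpace.single (2 : Fin 3) (1:ℝ))
        rw [hs0] at this
        simpa [EuclideanSpace.norm_single] using this
      rw [abs_le] at habs
      constructor
      · -- in Tcone
        show cc • tp a + Q a (t0 • yDir j + s0 •
          (EuclideanSpace.single (2 : Fin 3) (1:ℝ))) ∈ Tcone
        have hrep : cc • tp a + Q a (t0 • yDir j + s0 •
            (EuclideanSpace.single (2 : Fin 3) (1:ℝ)))
            = (cc + s0 + t0*(Real.sqrt 2/4)) • tp a + (t0*(3*Real.sqrt 2/4)) • tp (nbr a j) := by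
          rw [map_add, map_smul, map_smul, Q_yDir, Q_single]
          module
        rw [hrep]
        refine mem_Tcone a (nbr a j) (nbr_ne a j).symm _ _ ?_ ?_
        · nlinarith [Real.sqrt_nonneg 2, habs.1, hnorm', ht0, hcc]
        · positivity
      · show cc • tp a + Q a (t0 • yDir j + s0 •
          (EuclideanSpace.single (2 : Fin 3) (1:ℝ))) ∈ ball (cc • tp a) (cc/2)
        rw [mem_ball, dist_eq_norm, add_sub_cancel_left, (Q a).norm_map]
        exact hnorm'
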